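/- arXiv:2306.01460 — 2 statements merged into one kernel-verified Lean document; each statement's English description precedes it below -/
import Mathlib

section
/- Let (S, dist) be a metric space, μ a probability measure on S, v : S → ℝ a K-Lipschitz function with ∫ v dμ = v(s₀) for a fixed point s₀ ∈ S. Then ∫ max(0, v(s) − v(s₀)) dμ(s) ≤ (K/2) ∫ dist(s, s₀) dμ(s). -/
/-!
Since `v - v s₀` has mean zero, `max 0 a = (a + |a|) / 2` shows that the integral of its positive
part is half the integral of `|v - v s₀|`, and the Lipschitz bound `|v s - v s₀| ≤ K * dist s s₀`
controls the latter.
-/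

open MeasureTheory

theorem two_mul_integral_max_zero {α : Type*} [MeasurableSpace α] {μ : Measure α} {f : α → ℝ}
    (hf : Integrable f μ) :
    2 * ∫ x, max 0 (f x) ∂μ = ∫ x, f x ∂μ + ∫ x, |f x| ∂μ := by
  have two_mul_max_zero : ∀ a : ℝ, 2 * max 0 a = a + |a| := fun a => by
    rw [add_abs_eq_two_nsmul_posPart, posPart_def, two_nsmul, two_mul, max_comm]
  rw [← integral_const_mul, ← integral_add hf hf.abs]
  simp_rw [two_mul_max_zero]

theorem LipschitzWith.integral_abs_sub_le {S : Type*} [PseudoMetricSpace S] [MeasurableSpace S]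
    {μ : Measure S} {K : NNReal} {v : S → ℝ} (hlip : LipschitzWith K v) (s₀ : S)
    (hdist : Integrable (fun s => dist s s₀) μ) :
    ∫ s, |v s - v s₀| ∂μ ≤ K * ∫ s, dist s s₀ ∂μ := by
  rw [← integral_const_mul]
  refine integral_mono_of_nonneg (.of_forall fun s => abs_nonneg _) (hdist.const_mul _)
    (.of_forall fun s => ?_)
  simpa only [Real.dist_eq] using hlip.dist_le_mul s s₀

theorem integral_posPart_le_lipschitz {S : Type*} [MetricSpace S] [MeasurableSpace S]
    (μ : Measure S) [IsProbabilityMeasure μ] (K : NNReal) (v : S → ℝ)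
    (hlip : LipschitzWith K v) (s₀ : S)
    (hv : Integrable v μ) (hdist : Integrable (fun s => dist s s₀) μ)
    (hmean : ∫ s, v s ∂μ = v s₀) :
    ∫ s, max 0 (v s - v s₀) ∂μ ≤ ((K : ℝ) / 2) * ∫ s, dist s s₀ ∂μ := by
  have hcentered : ∫ s, (v s - v s₀) ∂μ = 0 := by
    rw [integral_sub hv (integrable_const _), hmean, integral_const, probReal_univ, one_smul,
      sub_self]
  have hsplit := two_mul_integral_max_zero (f := fun s => v s - v s₀)
    (hv.sub (integrable_const (v s₀)))
  rw [hcentered, zero_add] at hsplit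
  have habs := hlip.integral_abs_sub_le s₀ hdist
  linarith
end

section
/- Let S, A be finite sets, π : A → ℝ≥0 with ∑ₐ π(a) = 1, p : A → S → ℝ≥0 with ∑ₛ p(a, s') = 1 for each a, and let r : A → ℝ≥0, v : S → ℝ, γ ∈ [0,1]. Define q(a) := r(a) + γ ∑ₛ' p(a, s') v(s') and v₀ := ∑ₐ π(a) q(a). Then ∑ₐ π(a) max(0, q(a) − v₀) ≤ ∑ₐ π(a) [ r(a) + ∑ₛ' p(a, s') max(0, γ v(s') − v₀) ]. -/
/-!
Write `q a - v₀ = r a + ∑ s', p a s' * (γ * v s' - v₀)`, using that `p a` sums to one. Since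
`r a ≥ 0`, clipping at zero gives `(r a + x)⁺ ≤ r a + x⁺`, and `x ↦ x⁺` is subadditive and positively
homogeneous, so `(∑ p a s' * y s')⁺ ≤ ∑ p a s' * (y s')⁺`. Averaging over `π` finishes the proof.
-/

open Finset

lemma max_zero_add_le_add_max_zero {r x : ℝ} (hr : 0 ≤ r) : max 0 (r + x) ≤ r + max 0 x :=
  max_le (by linarith [le_max_left 0 x]) (by linarith [le_max_right 0 x])

lemma max_zero_sum_mul_le_sum_mul_max_zero {ι : Type*} (s : Finset ι) {w : ι → ℝ}
    (hw : ∀ i ∈ s, 0 ≤ w i) (f : ι → ℝ) :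
    max 0 (∑ i ∈ s, w i * f i) ≤ ∑ i ∈ s, w i * max 0 (f i) :=
  max_le (sum_nonneg fun i hi => mul_nonneg (hw i hi) (le_max_left _ _))
    (sum_le_sum fun i hi => mul_le_mul_of_nonneg_left (le_max_right _ _) (hw i hi))

lemma sum_mul_sub_const_of_sum_eq_one {ι : Type*} {s : Finset ι} {w : ι → ℝ}
    (hw : ∑ i ∈ s, w i = 1) (f : ι → ℝ) (c : ℝ) :
    ∑ i ∈ s, w i * (f i - c) = ∑ i ∈ s, w i * f i - c := by
  simp only [mul_sub, sum_sub_distrib, ← sum_mul, hw, one_mul]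

theorem clipped_advantage_decomp_finite_general {S A : Type*} [Fintype S] [Fintype A]
    (π : A → ℝ) (hπ0 : ∀ a, 0 ≤ π a)
    (p : A → S → ℝ) (hp0 : ∀ a s', 0 ≤ p a s') (hp1 : ∀ a, ∑ s', p a s' = 1)
    (r : A → ℝ) (hr0 : ∀ a, 0 ≤ r a) (v : S → ℝ)
    (γ : ℝ)
    (q : A → ℝ) (hq : ∀ a, q a = r a + γ * ∑ s', p a s' * v s')
    (v₀ : ℝ) :
    ∑ a, π a * max 0 (q a - v₀) ≤
      ∑ a, π a * (r a + ∑ s', p a s' * max 0 (γ * v s' - v₀)) := by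
  refine sum_le_sum fun a _ => mul_le_mul_of_nonneg_left ?_ (hπ0 a)
  have hadv : q a - v₀ = r a + ∑ s', p a s' * (γ * v s' - v₀) := by
    rw [sum_mul_sub_const_of_sum_eq_one (hp1 a), hq a, mul_sum]
    simp only [mul_left_comm γ]
    ring
  calc max 0 (q a - v₀)
      ≤ r a + max 0 (∑ s', p a s' * (γ * v s' - v₀)) := by
        rw [hadv]; exact max_zero_add_le_add_max_zero (hr0 a)
    _ ≤ r a + ∑ s', p a s' * max 0 (γ * v s' - v₀) := by
        gcongr; exact max_zero_sum_mul_le_sum_mul_max_zero _ (fun s' _ => hp0 a s') _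

theorem clipped_advantage_decomp_finite {S A : Type*} [Fintype S] [Fintype A]
    (π : A → ℝ) (hπ0 : ∀ a, 0 ≤ π a) (hπ1 : ∑ a, π a = 1)
    (p : A → S → ℝ) (hp0 : ∀ a s', 0 ≤ p a s') (hp1 : ∀ a, ∑ s', p a s' = 1)
    (r : A → ℝ) (hr0 : ∀ a, 0 ≤ r a) (v : S → ℝ)
    (γ : ℝ) (hγ : γ ∈ Set.Icc (0 : ℝ) 1)
    (q : A → ℝ) (hq : ∀ a, q a = r a + γ * ∑ s', p a s' * v s')
    (v₀ : ℝ) (hv₀ : v₀ = ∑ a, π a * q a) :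
    ∑ a, π a * max 0 (q a - v₀) ≤
      ∑ a, π a * (r a + ∑ s', p a s' * max 0 (γ * v s' - v₀)) :=
  clipped_advantage_decomp_finite_general π hπ0 p hp0 hp1 r hr0 v γ q hq v₀
end
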